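/- (Minimizer of the population-level problem.) Under the stated conditions (feasibility and bounded costs for the constraint costs, and a nonnegative bounded objective cost): (i) the feasible set {λ_{1:m} ∈ Λ_1×…×Λ_m : g_j^*(λ_j; λ_{1:(j−1)}) ≤ β_j for all j ∈ [m]} is nonempty, since it contains (λ_1^max,…,λ_m^max); and (ii) if the recursively defined thresholds λ_1^* = U_1^*(β_1) and λ_j^* = U_j^*(λ_1^*,…,λ_{j−1}^*; β_j) (for j = 2,…,m) satisfy λ_j^* ∈ (λ_j^min, λ_j^max) for every j ∈ [m], then λ_{1:m}^* is feasible and minimizes the objective R(λ_{1:m}) = E[V_{m+1}^{(n+1)}·1{S_1^{(n+1)} ≤ λ_1, …, S_m^{(n+1)} ≤ λ_m}] over the feasible set. -/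

import Mathlib

open MeasureTheory Set

attribute [local instance] Classical.propDecidable

noncomputable section

/-- The loss `L_j^{(i)}(λ_{1:j}) = V_j^{(i)} · 1{S_1^{(i)} ≤ λ_1, …, S_{j−1}^{(i)} ≤ λ_{j−1},
S_j^{(i)} > λ_j}`.  Only the coordinates `ℓ ≤ j` of the vector `lam` are read. -/
def lossFn {Ω : Type*} {m n : ℕ} (S V : Fin (n + 1) → Fin m → Ω → ℝ)
    (j : Fin m) (i : Fin (n + 1)) (lam : Fin m → ℝ) (ω : Ω) : ℝ :=
  V i j ω * (if (∀ l, l < j → S i l ω ≤ lam l) ∧ lam j < S i j ω then 1 else 0)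

/-- The population risk `g_j^*(λ_j; λ_{1:(j−1)}) = E[L_j^{(n+1)}(λ_{1:j})]`, the expectation being
taken at the test datapoint `i = n+1`. -/
def gStar {Ω : Type*} [MeasurableSpace Ω] {m n : ℕ} (μ : Measure Ω)
    (S V : Fin (n + 1) → Fin m → Ω → ℝ) (j : Fin m) (lam : Fin m → ℝ) : ℝ :=
  ∫ ω, lossFn S V j (Fin.last n) lam ω ∂μ

/-- `U_j^*(λ_{1:(j−1)}; b) = sup{x ∈ Λ_j : g_j^*(x; λ_{1:(j−1)}) > b}`, the supremum of the empty
set being `λ_j^min` (implemented by inserting `λ_j^min` into the set, which does not change the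
supremum of a nonempty subset of `Λ_j`). -/
def UStar {Ω : Type*} [MeasurableSpace Ω] {m n : ℕ} (μ : Measure Ω)
    (S V : Fin (n + 1) → Fin m → Ω → ℝ) (lamMin lamMax : Fin m → ℝ)
    (j : Fin m) (lam : Fin m → ℝ) (b : ℝ) : ℝ :=
  sSup (insert (lamMin j)
    {x | x ∈ Icc (lamMin j) (lamMax j) ∧ b < gStar μ S V j (Function.update lam j x)})

/-- The recursively defined population thresholds `λ_1^* = U_1^*(β_1)`,
`λ_j^* = U_j^*(λ_1^*,…,λ_{j−1}^*; β_j)`. -/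
def lamStar {Ω : Type*} [MeasurableSpace Ω] {m n : ℕ} (μ : Measure Ω)
    (S V : Fin (n + 1) → Fin m → Ω → ℝ) (lamMin lamMax β : Fin m → ℝ) (j : Fin m) : ℝ :=
  UStar μ S V lamMin lamMax j
    (fun ℓ => if hl : ℓ < j then lamStar μ S V lamMin lamMax β ℓ else 0) (β j)
termination_by j.val
decreasing_by exact hl

/-!
Everything rests on monotonicity: `g_j` is antitone in `λ_j` and monotone in the earlier
thresholds, since raising `λ_ℓ` (`ℓ < j`) enlarges the event of the loss and raising `λ_j` shrinks
it. So, by induction on `j`, a feasible `λ` has `λ_j^* ≤ λ_j`: every `x > λ_j` in `Λ_j` has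
`g_j(x; λ^*_{<j}) ≤ g_j(λ_j; λ_{<j}) ≤ β_j`, hence lies outside the set whose supremum is `λ_j^*`.
As the objective is monotone in `λ`, `λ^*` minimizes it. Feasibility of `λ^*` comes from
right-continuity of `g_j` in `λ_j` (dominated convergence): `g_j ≤ β_j` on `(λ_j^*, λ_j^max]`,
which is nonempty because `λ_j^* < λ_j^max`.
-/

open Filter Topology Function

lemma eventually_lt_iff_of_nhdsGT {α : Type*} [LinearOrder α] [TopologicalSpace α]
    [OrderTopology α] (c s : α) : ∀ᶠ x in 𝓝[>] c, (x < s ↔ c < s) := by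
  by_cases hcs : c < s
  · filter_upwards [nhdsWithin_le_nhds (Iio_mem_nhds hcs)] with x hx
    exact iff_of_true hx hcs
  · filter_upwards [self_mem_nhdsWithin] with x hx
    exact iff_of_false (fun hxs => hcs (lt_trans hx hxs)) hcs

lemma MeasureTheory.Integrable.mul_ite_one_zero {Ω : Type*} [MeasurableSpace Ω] {μ : Measure Ω}
    {f : Ω → ℝ} (hf : Integrable f μ) {p : Ω → Prop} [DecidablePred p]
    (hp : MeasurableSet {ω | p ω}) :
    Integrable (fun ω => f ω * if p ω then 1 else 0) μ :=
  hf.mul_bdd (c := 1) (Measurable.ite hp measurable_const measurable_const).aestronglyMeasurable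
    (Eventually.of_forall fun ω => by split_ifs <;> norm_num)

lemma integral_mul_ite_le_of_imp {Ω : Type*} [MeasurableSpace Ω] {μ : Measure Ω} {f : Ω → ℝ}
    {p q : Ω → Prop} [DecidablePred p] [DecidablePred q] (hf : 0 ≤ᵐ[μ] f)
    (hq : Integrable (fun ω => f ω * if q ω then 1 else 0) μ) (hpq : ∀ ω, p ω → q ω) :
    ∫ ω, f ω * (if p ω then 1 else 0) ∂μ ≤ ∫ ω, f ω * (if q ω then 1 else 0) ∂μ := by
  refine integral_mono_of_nonneg (hf.mono fun ω (hω : 0 ≤ f ω) => ?_) hq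
    (hf.mono fun ω (hω : 0 ≤ f ω) => ?_)
  · positivity
  · by_cases hp : p ω
    · simp only [if_pos hp, if_pos (hpq ω hp), le_refl]
    · simp only [if_neg hp, mul_zero]
      positivity

section Loss

variable {Ω : Type*} {m n : ℕ} (S V : Fin (n + 1) → Fin m → Ω → ℝ)

lemma lossFn_congr {j : Fin m} {i : Fin (n + 1)} {lam lam' : Fin m → ℝ}
    (h : ∀ l ≤ j, lam l = lam' l) : lossFn S V j i lam = lossFn S V j i lam' := by
  funext ω
  have hlt : (∀ l < j, S i l ω ≤ lam l) ↔ ∀ l < j, S i l ω ≤ lam' l :=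
    forall₂_congr fun l hl => by rw [h l hl.le]
  simp only [lossFn, hlt, h j le_rfl]

lemma lossFn_update_self (j : Fin m) (i : Fin (n + 1)) (lam : Fin m → ℝ) (x : ℝ) (ω : Ω) :
    lossFn S V j i (update lam j x) ω =
      V i j ω * if (∀ l < j, S i l ω ≤ lam l) ∧ x < S i j ω then 1 else 0 := by
  have hlt : (∀ l < j, S i l ω ≤ update lam j x l) ↔ ∀ l < j, S i l ω ≤ lam l :=
    forall₂_congr fun l hl => by rw [update_of_ne hl.ne]
  simp only [lossFn, hlt, update_self]

lemma norm_lossFn_le (j : Fin m) (i : Fin (n + 1)) (lam : Fin m → ℝ) (ω : Ω) :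
    ‖lossFn S V j i lam ω‖ ≤ ‖V i j ω‖ := by
  rw [lossFn, norm_mul]
  refine mul_le_of_le_one_right (norm_nonneg _) ?_
  split_ifs <;> norm_num

lemma lossFn_mono {j : Fin m} {i : Fin (n + 1)} {lam lam' : Fin m → ℝ}
    (h_lt : ∀ l < j, lam l ≤ lam' l) (h_j : lam' j ≤ lam j) {ω : Ω} (hV : 0 ≤ V i j ω) :
    lossFn S V j i lam ω ≤ lossFn S V j i lam' ω := by
  refine mul_le_mul_of_nonneg_left ?_ hV
  by_cases hc : (∀ l < j, S i l ω ≤ lam l) ∧ lam j < S i j ω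
  · rw [if_pos hc, if_pos ⟨fun l hl => (hc.1 l hl).trans (h_lt l hl), h_j.trans_lt hc.2⟩]
  · rw [if_neg hc]
    split_ifs <;> norm_num

lemma integrable_lossFn [MeasurableSpace Ω] {μ : Measure Ω} {j : Fin m} {i : Fin (n + 1)}
    (hS : ∀ l, Measurable (S i l)) (hV : Integrable (V i j) μ) (lam : Fin m → ℝ) :
    Integrable (lossFn S V j i lam) μ := by
  have hset : MeasurableSet {ω | (∀ l < j, S i l ω ≤ lam l) ∧ lam j < S i j ω} := by
    simp only [ofPred_and, ofPred_forall]
    exact .inter (.iInter fun l => .iInter fun _ => measurableSet_le (hS l) measurable_const)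
      (measurableSet_lt measurable_const (hS j))
  exact hV.mul_ite_one_zero hset

end Loss

section Risk

variable {Ω : Type*} [MeasurableSpace Ω] {m n : ℕ} (μ : Measure Ω)
  {S V : Fin (n + 1) → Fin m → Ω → ℝ}

lemma gStar_congr {j : Fin m} {lam lam' : Fin m → ℝ} (h : ∀ l ≤ j, lam l = lam' l) :
    gStar μ S V j lam = gStar μ S V j lam' := by
  rw [gStar, gStar, lossFn_congr S V h]

variable (hS : ∀ l, Measurable (S (Fin.last n) l))
include hS

lemma gStar_mono {j : Fin m} (hV : Integrable (V (Fin.last n) j) μ)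
    (hV0 : 0 ≤ᵐ[μ] V (Fin.last n) j) {lam lam' : Fin m → ℝ}
    (h_lt : ∀ l < j, lam l ≤ lam' l) (h_j : lam' j ≤ lam j) :
    gStar μ S V j lam ≤ gStar μ S V j lam' :=
  integral_mono_ae (integrable_lossFn S V hS hV lam) (integrable_lossFn S V hS hV lam')
    (hV0.mono fun _ hω => lossFn_mono S V h_lt h_j hω)

lemma continuousWithinAt_gStar_update {j : Fin m} (hV : Integrable (V (Fin.last n) j) μ)
    (lam : Fin m → ℝ) (c : ℝ) :
    ContinuousWithinAt (fun x => gStar μ S V j (update lam j x)) (Ioi c) c := by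
  refine tendsto_integral_filter_of_dominated_convergence (fun ω => ‖V (Fin.last n) j ω‖)
    (Eventually.of_forall fun x => (integrable_lossFn S V hS hV _).aestronglyMeasurable)
    (Eventually.of_forall fun x => Eventually.of_forall fun ω => norm_lossFn_le S V j _ _ ω)
    hV.norm (Eventually.of_forall fun ω => tendsto_const_nhds.congr' ?_)
  filter_upwards [eventually_lt_iff_of_nhdsGT c (S (Fin.last n) j ω)] with x hx
  simp only [lossFn_update_self, hx]

end Risk

section Threshold

variable {Ω : Type*} [MeasurableSpace Ω] {m n : ℕ} (μ : Measure Ω)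
  {S V : Fin (n + 1) → Fin m → Ω → ℝ} {lamMin lamMax : Fin m → ℝ} {j : Fin m}
  {lam : Fin m → ℝ} {b : ℝ}

lemma bddAbove_UStar_set : BddAbove (insert (lamMin j)
    {x | x ∈ Icc (lamMin j) (lamMax j) ∧ b < gStar μ S V j (update lam j x)}) :=
  (bddAbove_Icc.mono fun _ hx => hx.1).insert _

lemma lamMin_le_UStar : lamMin j ≤ UStar μ S V lamMin lamMax j lam b :=
  le_csSup (bddAbove_UStar_set μ) (mem_insert _ _)

lemma le_UStar {x : ℝ} (hx : x ∈ Icc (lamMin j) (lamMax j))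
    (hb : b < gStar μ S V j (update lam j x)) : x ≤ UStar μ S V lamMin lamMax j lam b :=
  le_csSup (bddAbove_UStar_set μ) (mem_insert_of_mem _ ⟨hx, hb⟩)

lemma UStar_le {y : ℝ} (hy : lamMin j ≤ y)
    (h : ∀ x ∈ Icc (lamMin j) (lamMax j), y < x → gStar μ S V j (update lam j x) ≤ b) :
    UStar μ S V lamMin lamMax j lam b ≤ y := by
  refine csSup_le (insert_nonempty _ _) ?_
  rintro x (rfl | ⟨hx, hb⟩)
  · exact hy
  · exact le_of_not_gt fun hyx => (h x hx hyx).not_gt hb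

lemma gStar_update_le_of_UStar_lt {y : ℝ} (hy : UStar μ S V lamMin lamMax j lam b < y)
    (hy' : y ≤ lamMax j) : gStar μ S V j (update lam j y) ≤ b :=
  le_of_not_gt fun hb => hy.not_ge (le_UStar μ ⟨(lamMin_le_UStar μ).trans hy.le, hy'⟩ hb)

lemma gStar_update_UStar_le (hS : ∀ l, Measurable (S (Fin.last n) l))
    (hV : Integrable (V (Fin.last n) j) μ) (hlt : UStar μ S V lamMin lamMax j lam b < lamMax j) :
    gStar μ S V j (update lam j (UStar μ S V lamMin lamMax j lam b)) ≤ b :=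
  le_of_tendsto (continuousWithinAt_gStar_update μ hS hV lam _)
    (mem_of_superset (Ioc_mem_nhdsGT hlt) fun _ hy => gStar_update_le_of_UStar_lt μ hy.1 hy.2)

end Threshold

section Recursion

variable {Ω : Type*} [MeasurableSpace Ω] {m n : ℕ} (μ : Measure Ω)
  {S V : Fin (n + 1) → Fin m → Ω → ℝ} {lamMin lamMax β : Fin m → ℝ}

lemma lamStar_eq_UStar (j : Fin m) :
    lamStar μ S V lamMin lamMax β j =
      UStar μ S V lamMin lamMax j (lamStar μ S V lamMin lamMax β) (β j) := by
  rw [lamStar]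
  simp only [UStar]
  congr
  ext x
  rw [gStar_congr μ fun l hl => ?_]
  rcases hl.lt_or_eq with hl | rfl
  · simp only [update_of_ne hl.ne, dif_pos hl]
  · simp only [update_self]

variable (hS : ∀ l, Measurable (S (Fin.last n) l))
include hS

lemma gStar_lamStar_le {j : Fin m} (hV : Integrable (V (Fin.last n) j) μ)
    (hlt : lamStar μ S V lamMin lamMax β j < lamMax j) :
    gStar μ S V j (lamStar μ S V lamMin lamMax β) ≤ β j := by
  rw [lamStar_eq_UStar] at hlt
  have h := gStar_update_UStar_le μ hS hV hlt
  rwa [← lamStar_eq_UStar, update_eq_self] at h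

lemma lamStar_le_of_feasible (hV : ∀ j, Integrable (V (Fin.last n) j) μ)
    (hV0 : ∀ j, 0 ≤ᵐ[μ] V (Fin.last n) j) {lam : Fin m → ℝ} (hmin : ∀ j, lamMin j ≤ lam j)
    (hg : ∀ j, gStar μ S V j lam ≤ β j) (j : Fin m) :
    lamStar μ S V lamMin lamMax β j ≤ lam j := by
  induction j using WellFoundedLT.induction with
  | ind j ih =>
    rw [lamStar_eq_UStar]
    refine UStar_le μ (hmin j) fun x _ hx => (gStar_mono μ hS (hV j) (hV0 j) ?_ ?_).trans (hg j)
    · intro l hl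
      rw [update_of_ne hl.ne]
      exact ih l hl
    · rw [update_self]
      exact hx.le

end Recursion

theorem population_minimizer_general
    {Ω : Type*} [MeasurableSpace Ω] (μ : Measure Ω) [IsProbabilityMeasure μ]
    (m n : ℕ)
    (S V : Fin (n + 1) → Fin m → Ω → ℝ) (Vobj : Ω → ℝ)
    (hSmeas : ∀ i j, Measurable (S i j)) (hVmeas : ∀ i j, Measurable (V i j))
    (hVobjmeas : Measurable Vobj)
    (VmaxObj : ℝ) (hVobj : ∀ᵐ ω ∂μ, Vobj ω ∈ Icc (0 : ℝ) VmaxObj)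
    (lamMin lamMax : Fin m → ℝ) (hΛ : ∀ j, lamMin j ≤ lamMax j)
    (β : Fin m → ℝ)
    (Vmin Vmax : Fin m → ℝ) (hVmin0 : ∀ j, 0 ≤ Vmin j)
    (hVbd : ∀ i j, ∀ᵐ ω ∂μ, V i j ω ∈ Icc (Vmin j) (Vmax j))
    (hfeas : ∀ (j : Fin m) (i : Fin (n + 1)), ∀ᵐ ω ∂μ, lossFn S V j i lamMax ω ≤ β j) :
    -- (i) the point (λ_1^max, …, λ_m^max) is feasible
    ((∀ j : Fin m, lamMax j ∈ Icc (lamMin j) (lamMax j)) ∧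
      (∀ j : Fin m, gStar μ S V j lamMax ≤ β j)) ∧
    -- (ii) if λ_j^* ∈ (λ_j^min, λ_j^max) for all j, then λ^* is a feasible minimizer
    ((∀ j : Fin m,
        lamStar μ S V lamMin lamMax β j ∈ Ioo (lamMin j) (lamMax j)) →
      ((∀ j : Fin m,
          gStar μ S V j (fun ℓ => lamStar μ S V lamMin lamMax β ℓ) ≤ β j) ∧
        (∀ lam : Fin m → ℝ,
          (∀ j : Fin m, lam j ∈ Icc (lamMin j) (lamMax j)) →
          (∀ j : Fin m, gStar μ S V j lam ≤ β j) →
          (∫ ω, Vobj ω *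
              (if ∀ j : Fin m, S (Fin.last n) j ω ≤ lamStar μ S V lamMin lamMax β j
               then 1 else 0) ∂μ)
            ≤ ∫ ω, Vobj ω *
                (if ∀ j : Fin m, S (Fin.last n) j ω ≤ lam j then 1 else 0) ∂μ))) := by
  have hS := hSmeas (Fin.last n)
  have hV0 : ∀ j, 0 ≤ᵐ[μ] V (Fin.last n) j := fun j =>
    (hVbd _ j).mono fun _ hω => (hVmin0 j).trans hω.1
  have hV : ∀ j, Integrable (V (Fin.last n) j) μ := fun j =>
    .of_bound (hVmeas _ j).aestronglyMeasurable (Vmax j) <| (hVbd _ j).mono fun _ hω => by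
      rw [Real.norm_of_nonneg ((hVmin0 j).trans hω.1)]
      exact hω.2
  have hVobjInt : Integrable Vobj μ :=
    .of_bound hVobjmeas.aestronglyMeasurable VmaxObj <| hVobj.mono fun _ hω => by
      rw [Real.norm_of_nonneg hω.1]
      exact hω.2
  refine ⟨⟨fun j => ⟨hΛ j, le_rfl⟩, fun j => ?_⟩, fun hIoo => ⟨fun j =>
    gStar_lamStar_le μ hS (hV j) (hIoo j).2, fun lam hlam hg => ?_⟩⟩
  · calc gStar μ S V j lamMax ≤ ∫ _, β j ∂μ :=
          integral_mono_ae (integrable_lossFn S V hS (hV j) _) (integrable_const _) (hfeas j _)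
      _ = β j := by simp
  · have hle : ∀ j, lamStar μ S V lamMin lamMax β j ≤ lam j :=
      lamStar_le_of_feasible μ hS hV hV0 (fun j => (hlam j).1) hg
    refine integral_mul_ite_le_of_imp (hVobj.mono fun _ hω => hω.1) (hVobjInt.mul_ite_one_zero ?_)
      fun ω hω j => (hω j).trans (hle j)
    simp only [ofPred_forall]
    exact .iInter fun j => measurableSet_le (hS j) measurable_const

/-- Lemma: minimizer of the population-level problem.  (i) The feasible set of
the population problem contains `(λ_1^max,…,λ_m^max)`, hence is nonempty; (ii) if the recursively
defined thresholds `λ_j^* = U_j^*(λ_{1:(j−1)}^*; β_j)` satisfy `λ_j^* ∈ (λ_j^min, λ_j^max)` for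
every `j`, then `λ_{1:m}^*` is feasible and minimizes the objective
`R(λ) = E[V_{m+1}^{(n+1)}·1{S_1^{(n+1)} ≤ λ_1,…,S_m^{(n+1)} ≤ λ_m}]` over the feasible set. -/
theorem population_minimizer
    {Ω : Type*} [MeasurableSpace Ω] (μ : Measure Ω) [IsProbabilityMeasure μ]
    (m n : ℕ) (hm : 1 ≤ m) (hn : 1 ≤ n)
    (S V : Fin (n + 1) → Fin m → Ω → ℝ) (Vobj : Ω → ℝ)
    (hSmeas : ∀ i j, Measurable (S i j)) (hVmeas : ∀ i j, Measurable (V i j))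
    (hVobjmeas : Measurable Vobj)
    (VmaxObj : ℝ) (hVobj : ∀ᵐ ω ∂μ, Vobj ω ∈ Icc (0 : ℝ) VmaxObj)
    (lamMin lamMax : Fin m → ℝ) (hΛ : ∀ j, lamMin j ≤ lamMax j)
    (β : Fin m → ℝ) (hβ : ∀ j, 0 ≤ β j)
    (Vmin Vmax : Fin m → ℝ) (hVmin0 : ∀ j, 0 ≤ Vmin j) (hVle : ∀ j, Vmin j ≤ Vmax j)
    (hVbd : ∀ i j, ∀ᵐ ω ∂μ, V i j ω ∈ Icc (Vmin j) (Vmax j))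
    (hfeas : ∀ (j : Fin m) (i : Fin (n + 1)), ∀ᵐ ω ∂μ, lossFn S V j i lamMax ω ≤ β j) :
    -- (i) the point (λ_1^max, …, λ_m^max) is feasible
    ((∀ j : Fin m, lamMax j ∈ Icc (lamMin j) (lamMax j)) ∧
      (∀ j : Fin m, gStar μ S V j lamMax ≤ β j)) ∧
    -- (ii) if λ_j^* ∈ (λ_j^min, λ_j^max) for all j, then λ^* is a feasible minimizer
    ((∀ j : Fin m,
        lamStar μ S V lamMin lamMax β j ∈ Ioo (lamMin j) (lamMax j)) →
      ((∀ j : Fin m,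
          gStar μ S V j (fun ℓ => lamStar μ S V lamMin lamMax β ℓ) ≤ β j) ∧
        (∀ lam : Fin m → ℝ,
          (∀ j : Fin m, lam j ∈ Icc (lamMin j) (lamMax j)) →
          (∀ j : Fin m, gStar μ S V j lam ≤ β j) →
          (∫ ω, Vobj ω *
              (if ∀ j : Fin m, S (Fin.last n) j ω ≤ lamStar μ S V lamMin lamMax β j
               then 1 else 0) ∂μ)
            ≤ ∫ ω, Vobj ω *
                (if ∀ j : Fin m, S (Fin.last n) j ω ≤ lam j then 1 else 0) ∂μ))) :=
  population_minimizer_general μ m n S V Vobj hSmeas hVmeas hVobjmeas VmaxObj hVobj lamMin lamMax hΛ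
    β Vmin Vmax hVmin0 hVbd hfeas

end
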